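/- arXiv:2205.08795 — 2 statements merged into one kernel-verified Lean document; each statement's English description precedes it below -/
import Mathlib

section
/- Let p be a prime number and ℓ ≥ 2. The automorphism group of the group-annihilator graph Γ((ℤ/pℤ)^ℓ) acts transitively on the vertex set: for any two vertices a, b ∈ (ℤ/pℤ)^ℓ there exists a graph automorphism σ of Γ((ℤ/pℤ)^ℓ) with σ(a) = b. In particular, (ℤ/pℤ)^ℓ is a single orbit of size p^ℓ under this action. -/
/-- The `a`-annihilator of the abelian group `G` (viewed as a `ℤ`-module):
`[a : G] = {x ∈ ℤ : x•G ⊆ ℤ•a}`. -/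
def annIdeal (G : Type*) [AddCommGroup G] (a : G) : Set ℤ :=
  {x : ℤ | ∀ g : G, ∃ m : ℤ, x • g = m • a}

/-- The group-annihilator graph `Γ(G)`: vertices are the elements of `G`, and distinct
`a`, `b` are adjacent iff `[a : G]·[b : G]·G = {0}`. -/
def grpAnnGraph (G : Type*) [AddCommGroup G] : SimpleGraph G where
  Adj a b := a ≠ b ∧ ∀ x ∈ annIdeal G a, ∀ y ∈ annIdeal G b, ∀ g : G, (x * y) • g = 0
  symm := by
    constructor
    rintro a b ⟨hne, h⟩
    refine ⟨hne.symm, fun y hy x hx g => ?_⟩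
    rw [mul_comm]
    exact h x hx y hy g
  loopless := ⟨fun a h => h.1 rfl⟩

/-!
If `x ∈ [a : R^ι]` with `x ≠ 0` in a ring without zero divisors, then `x • eᵢ = m • a` forces
`m ≠ 0` and `a j = 0` for `j ≠ i`, while `x • eⱼ = m' • a` forces `a j ≠ 0`. Hence every
`a`-annihilator kills `R^ι` as soon as there are two coordinates, so `Γ(R^ι)` is the complete
graph, and every permutation of the vertices is an automorphism.
-/

section Pi

variable {ι R : Type*} [Ring R] [NoZeroDivisors R]

theorem intCast_eq_zero_of_mem_annIdeal {i j : ι} (hij : i ≠ j) {a : ι → R} {x : ℤ}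
    (hx : x ∈ annIdeal (ι → R) a) : (x : R) = 0 := by
  classical
  by_contra hx0
  obtain ⟨mi, hmi⟩ := hx (Pi.single i 1)
  obtain ⟨mj, hmj⟩ := hx (Pi.single j 1)
  have hxi : (x : R) = mi * a i := by simpa [zsmul_eq_mul] using congrFun hmi i
  have hai : (0 : R) = mi * a j := by simpa [zsmul_eq_mul, hij.symm] using congrFun hmi j
  have hxj : (x : R) = mj * a j := by simpa [zsmul_eq_mul] using congrFun hmj j
  have hmi0 : (mi : R) ≠ 0 := fun h => hx0 (by rw [hxi, h, zero_mul])
  have haj0 : a j ≠ 0 := fun h => hx0 (by rw [hxj, h, mul_zero])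
  exact mul_ne_zero hmi0 haj0 hai.symm

theorem smul_eq_zero_of_mem_annIdeal [Nontrivial ι] {a : ι → R} {x : ℤ}
    (hx : x ∈ annIdeal (ι → R) a) (g : ι → R) : x • g = 0 := by
  obtain ⟨i, j, hij⟩ := exists_pair_ne ι
  funext k
  simp [zsmul_eq_mul, intCast_eq_zero_of_mem_annIdeal hij hx]

theorem grpAnnGraph_pi_eq_top [Nontrivial ι] : grpAnnGraph (ι → R) = ⊤ := by
  ext a b
  refine ⟨fun h => h.1, fun hab => ⟨hab, fun x _ y hy g => ?_⟩⟩
  rw [mul_smul, smul_eq_zero_of_mem_annIdeal hy, smul_zero]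

end Pi

/-- For a prime `p` and `ℓ ≥ 2`, the automorphism group of
`Γ((ℤ/pℤ)^ℓ)` acts transitively on the vertices; in particular the vertex set is a
single orbit of size `p^ℓ`. -/
theorem grpAnnGraph_aut_transitive (p ℓ : ℕ) (hp : p.Prime) (hℓ : 2 ≤ ℓ) :
    (∀ a b : Fin ℓ → ZMod p,
        ∃ σ : grpAnnGraph (Fin ℓ → ZMod p) ≃g grpAnnGraph (Fin ℓ → ZMod p), σ a = b) ∧
    Nat.card (Fin ℓ → ZMod p) = p ^ ℓ := by
  have : Fact p.Prime := ⟨hp⟩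
  have : Nontrivial (Fin ℓ) := Fin.nontrivial_iff_two_le.mpr hℓ
  refine ⟨fun a b => ?_, by rw [Nat.card_fun, Nat.card_zmod, Nat.card_fin]⟩
  rw [grpAnnGraph_pi_eq_top]
  exact ⟨SimpleGraph.Iso.completeGraph (Equiv.swap a b), Equiv.swap_apply_left a b⟩
end

section
/- Let p be an odd prime number and k ≥ 1. A real number μ is an eigenvalue of the Laplacian matrix of the group-annihilator graph Γ(ℤ/p^kℤ) if and only if μ = 0 or μ = p^i for some integer i with 0 ≤ i ≤ k. That is, the Laplacian spectrum of Γ(ℤ/p^kℤ), as a set, equals {0, 1, p, p², …, p^{k−1}, p^k}. -/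
open Classical in
/-- The Laplacian matrix `D - A` of a finite simple graph: diagonal entries are the
vertex degrees, off-diagonal entries are `-1` for adjacent pairs and `0` otherwise. -/
noncomputable def lapMat {V : Type*} [Fintype V] [DecidableEq V] (Γ : SimpleGraph V) :
    Matrix V V ℝ :=
  Matrix.of fun a b =>
    if a = b then ((Γ.neighborSet a).ncard : ℝ) else if Γ.Adj a b then -1 else 0

open Finset Matrix Module.End

theorem Module.End.mem_of_hasEigenvector_of_finrank_le {K V : Type*} [Field K] [AddCommGroup V]
    [Module K V] {f : Module.End K V} {W : Submodule K V} [FiniteDimensional K W] {Λ : Finset K}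
    (hΛ : Module.finrank K W ≤ #Λ) (hev : ∀ ν ∈ Λ, ∃ v ∈ W, f.HasEigenvector ν v)
    {μ : K} {u : V} (hu : f.HasEigenvector μ u) (huW : u ∈ W) : μ ∈ Λ := by
  classical
  by_contra hμ
  have hev' : ∀ ν ∈ insert μ Λ, ∃ v ∈ W, f.HasEigenvector ν v :=
    Finset.forall_mem_insert _ _ _ |>.mpr ⟨⟨u, huW, hu⟩, hev⟩
  choose v hvW hv using hev'
  let w : (↑(insert μ Λ) : Set K) → W := fun ν => ⟨v ν ν.2, hvW ν ν.2⟩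
  have hw : LinearIndependent K w :=
    .of_comp W.subtype (f.eigenvectors_linearIndependent _ _ fun ν => hv ν ν.2)
  have := hw.fintype_card_le_finrank
  simp only [Finset.coe_sort_coe, Fintype.card_coe, Finset.card_insert_of_notMem hμ] at this
  omega

theorem Matrix.hasEigenvector_toLin'_iff {n R : Type*} [Fintype n] [DecidableEq n] [CommRing R]
    {A : Matrix n n R} {μ : R} {v : n → R} :
    HasEigenvector (toLin' A) μ v ↔ A *ᵥ v = μ • v ∧ v ≠ 0 := by
  rw [hasEigenvector_iff, mem_eigenspace_iff, toLin'_apply]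

theorem lapMat_eq_lapMatrix {V : Type*} [Fintype V] [DecidableEq V] (Γ : SimpleGraph V)
    [DecidableRel Γ.Adj] : lapMat Γ = Γ.lapMatrix ℝ := by
  ext a b
  rcases eq_or_ne a b with rfl | hab
  · simp [lapMat, SimpleGraph.lapMatrix, SimpleGraph.degMatrix, Set.ncard_eq_toFinset_card',
      ← SimpleGraph.card_neighborFinset_eq_degree, SimpleGraph.neighborFinset_eq_filter]
  · by_cases h : Γ.Adj a b <;> simp [lapMat, SimpleGraph.lapMatrix, SimpleGraph.degMatrix, hab, h]

theorem lapMat_mulVec_const {V : Type*} [Fintype V] [DecidableEq V] (Γ : SimpleGraph V) :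
    lapMat Γ *ᵥ (fun _ => 1) = 0 := by
  classical
  rw [lapMat_eq_lapMatrix, SimpleGraph.lapMatrix_mulVec_const_eq_zero]

theorem lapMat_hasEigenvector_const {V : Type*} [Fintype V] [DecidableEq V] [Nonempty V]
    (Γ : SimpleGraph V) : HasEigenvector (toLin' (lapMat Γ)) 0 fun _ => 1 :=
  Matrix.hasEigenvector_toLin'_iff.mpr ⟨by rw [lapMat_mulVec_const, zero_smul],
    Function.ne_iff.mpr ⟨Classical.arbitrary V, one_ne_zero⟩⟩

theorem lapMat_mulVec_apply_of_neighborFinset {V : Type*} [Fintype V] [DecidableEq V]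
    (Γ : SimpleGraph V) [DecidableRel Γ.Adj] (f : V → ℝ) (a : V) (N : Finset V)
    (hN : Γ.neighborFinset a = N.erase a) :
    (lapMat Γ *ᵥ f) a = #N * f a - ∑ b ∈ N, f b := by
  rw [lapMat_eq_lapMatrix, SimpleGraph.lapMatrix_mulVec_apply,
    ← SimpleGraph.card_neighborFinset_eq_degree, hN]
  by_cases ha : a ∈ N
  · rw [Finset.cast_card_erase_of_mem ha, Finset.sum_erase_eq_sub ha]
    ring
  · rw [Finset.erase_eq_of_notMem ha]

theorem annIdeal_zmod (n : ℕ) (a : ZMod n) :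
    annIdeal (ZMod n) a = {x : ℤ | a ∣ (x : ZMod n)} := by
  ext x
  simp only [annIdeal, Set.mem_ofPred_eq, zsmul_eq_mul]
  constructor
  · intro h
    obtain ⟨m, hm⟩ := h 1
    exact ⟨m, by rw [← mul_one (x : ZMod n), hm, mul_comm]⟩
  · rintro ⟨c, hc⟩ g
    obtain ⟨m, hm⟩ := ZMod.intCast_surjective (c * g)
    exact ⟨m, by rw [hc, hm]; ring⟩

theorem grpAnnGraph_zmod_adj_iff (n : ℕ) (a b : ZMod n) :
    (grpAnnGraph (ZMod n)).Adj a b ↔ a ≠ b ∧ a * b = 0 := by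
  change (a ≠ b ∧ _) ↔ _
  simp only [annIdeal_zmod, Set.mem_ofPred_eq, zsmul_eq_mul, Int.cast_mul]
  refine and_congr_right fun _ => ⟨fun h => ?_, ?_⟩
  · obtain ⟨x, rfl⟩ := ZMod.intCast_surjective a
    obtain ⟨y, rfl⟩ := ZMod.intCast_surjective b
    simpa using h x dvd_rfl y dvd_rfl 1
  · rintro hab x ⟨c, hc⟩ y ⟨d, hd⟩ g
    rw [hc, hd, mul_mul_mul_comm, hab, zero_mul, zero_mul]

def padicValZMod (p k : ℕ) (a : ZMod (p ^ k)) : ℕ :=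
  if a = 0 then k else padicValNat p a.val

section padicValZMod

variable {p k : ℕ}

theorem padicValZMod_zero : padicValZMod p k 0 = k := if_pos rfl

theorem padicValZMod_natCast {n : ℕ} (hn0 : n ≠ 0) (hn : n < p ^ k) :
    padicValZMod p k n = padicValNat p n := by
  have hval : (n : ZMod (p ^ k)).val = n := ZMod.val_natCast_of_lt hn
  rw [padicValZMod, if_neg (fun h => hn0 (by rw [← hval, h, ZMod.val_zero])), hval]

def valIndicator (p k t : ℕ) (a : ZMod (p ^ k)) : ℝ :=
  if t ≤ padicValZMod p k a then 1 else 0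

def valInvariant (p k : ℕ) : Submodule ℝ (ZMod (p ^ k) → ℝ) where
  carrier := {f | ∀ a b, padicValZMod p k a = padicValZMod p k b → f a = f b}
  add_mem' hf hg a b h := congrArg₂ (· + ·) (hf a b h) (hg a b h)
  zero_mem' _ _ _ := rfl
  smul_mem' c _ hf a b h := congrArg (c * ·) (hf a b h)

theorem const_mem_valInvariant (c : ℝ) : (fun _ => c) ∈ valInvariant p k := fun _ _ _ => rfl

theorem valIndicator_mem_valInvariant (t : ℕ) : valIndicator p k t ∈ valInvariant p k :=
  fun a b h => by simp only [valIndicator, h]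

variable [Fact p.Prime]

theorem padicValZMod_le (a : ZMod (p ^ k)) : padicValZMod p k a ≤ k := by
  unfold padicValZMod
  split_ifs with ha
  · exact le_rfl
  · have hval : a.val ≠ 0 := (ZMod.val_ne_zero a).mpr ha
    have : p ^ padicValNat p a.val < p ^ k :=
      (Nat.le_of_dvd (Nat.pos_of_ne_zero hval) pow_padicValNat_dvd).trans_lt (ZMod.val_lt a)
    exact ((Nat.pow_lt_pow_iff_right (Fact.out : p.Prime).one_lt).mp this).le

theorem le_padicValZMod_iff {m : ℕ} (hm : m ≤ k) (a : ZMod (p ^ k)) :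
    m ≤ padicValZMod p k a ↔ p ^ m ∣ a.val := by
  unfold padicValZMod
  split_ifs with ha
  · simp [ha, hm]
  · exact (padicValNat_dvd_iff_le ((ZMod.val_ne_zero a).mpr ha)).symm

theorem padicValZMod_pow {i : ℕ} (hi : i ≤ k) :
    padicValZMod p k ((p ^ i : ℕ) : ZMod (p ^ k)) = i := by
  rcases hi.lt_or_eq with hi | rfl
  · rw [padicValZMod_natCast (pow_ne_zero _ (Fact.out : p.Prime).ne_zero)
      (Nat.pow_lt_pow_right (Fact.out : p.Prime).one_lt hi), padicValNat.prime_pow]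
  · rw [ZMod.natCast_self, padicValZMod_zero]

theorem mul_eq_zero_iff_le_padicValZMod_add (a b : ZMod (p ^ k)) :
    a * b = 0 ↔ k ≤ padicValZMod p k a + padicValZMod p k b := by
  by_cases ha : a = 0
  · simp [ha, padicValZMod_zero]
  by_cases hb : b = 0
  · simp [hb, padicValZMod_zero]
  have ha' : a.val ≠ 0 := (ZMod.val_ne_zero a).mpr ha
  have hb' : b.val ≠ 0 := (ZMod.val_ne_zero b).mpr hb
  rw [padicValZMod, padicValZMod, if_neg ha, if_neg hb, ← padicValNat.mul ha' hb',
    ← padicValNat_dvd_iff_le (Nat.mul_ne_zero ha' hb'), ← ZMod.natCast_eq_zero_iff,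
    Nat.cast_mul, ZMod.natCast_val, ZMod.natCast_val, ZMod.cast_id, ZMod.cast_id]

theorem card_le_padicValZMod {m : ℕ} (hm : m ≤ k) :
    #{b : ZMod (p ^ k) | m ≤ padicValZMod p k b} = p ^ (k - m) := by
  let φ := ZMod.castHom (pow_dvd_pow p hm) (ZMod (p ^ m))
  have hfilter : #{b : ZMod (p ^ k) | m ≤ padicValZMod p k b} = #{b | φ b = 0} := by
    congr 1
    ext b
    rw [mem_filter, mem_filter, le_padicValZMod_iff hm, ZMod.castHom_apply, ZMod.cast_eq_val,
      ZMod.natCast_eq_zero_iff]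
  have hfiber (y : ZMod (p ^ m)) : #{b | φ b = y} = #{b | φ b = 0} :=
    AddMonoidHom.card_fiber_eq_of_mem_range φ (ZMod.castHom_surjective _ y) ⟨0, map_zero φ⟩
  have htotal : p ^ m * p ^ (k - m) = p ^ m * #{b | φ b = 0} := by
    rw [← pow_add, Nat.add_sub_cancel' hm]
    have := card_eq_sum_card_fiberwise (f := φ) (s := univ) (t := univ) fun _ _ => mem_univ _
    rwa [sum_congr rfl fun y _ => hfiber y, sum_const, card_univ, card_univ, ZMod.card, ZMod.card,
      smul_eq_mul] at this
  rw [hfilter, Nat.eq_of_mul_eq_mul_left (pow_pos (Fact.out : p.Prime).pos m) htotal]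

theorem exists_ne_padicValZMod_eq (hp2 : p ≠ 2) {i : ℕ} (hi : i < k) :
    ∃ x y : ZMod (p ^ k), x ≠ y ∧ padicValZMod p k x = i ∧ padicValZMod p k y = i := by
  have hp : p.Prime := Fact.out
  have hpi : 0 < p ^ i := pow_pos hp.pos i
  have h2pi : 2 * p ^ i < p ^ k :=
    calc 2 * p ^ i < p * p ^ i := Nat.mul_lt_mul_of_pos_right (by have := hp.two_le; omega) hpi
      _ = p ^ (i + 1) := (pow_succ' p i).symm
      _ ≤ p ^ k := Nat.pow_le_pow_right hp.pos hi
  refine ⟨(p ^ i : ℕ), (2 * p ^ i : ℕ), fun h => ?_, padicValZMod_pow hi.le, ?_⟩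
  · have hpik : p ^ i < p ^ k := Nat.pow_lt_pow_right hp.one_lt hi
    have := congrArg ZMod.val h
    rw [ZMod.val_natCast_of_lt hpik, ZMod.val_natCast_of_lt h2pi] at this
    omega
  · rw [padicValZMod_natCast (by positivity) h2pi, padicValNat.mul two_ne_zero hpi.ne',
      padicValNat.prime_pow, padicValNat.eq_zero_of_not_dvd, zero_add]
    exact fun h => hp2 ((Nat.prime_dvd_prime_iff_eq hp Nat.prime_two).mp h)

theorem finrank_valInvariant_le : Module.finrank ℝ (valInvariant p k) ≤ k + 1 := by
  let restrict : valInvariant p k →ₗ[ℝ] Fin (k + 1) → ℝ :=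
    LinearMap.funLeft ℝ ℝ (fun i : Fin (k + 1) => ((p ^ (i : ℕ) : ℕ) : ZMod (p ^ k))) ∘ₗ
      (valInvariant p k).subtype
  have hrestrict : Function.Injective restrict := by
    intro f g hfg
    ext a
    have ha := padicValZMod_pow (p := p) (padicValZMod_le a)
    have := congrFun hfg ⟨padicValZMod p k a, Nat.lt_succ_of_le (padicValZMod_le a)⟩
    rwa [f.2 a _ ha.symm, g.2 a _ ha.symm]
  simpa using LinearMap.finrank_le_finrank_of_injective hrestrict

end padicValZMod

section Laplacian

variable {p k : ℕ} [Fact p.Prime]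

theorem lapMat_grpAnnGraph_mulVec_apply (f : ZMod (p ^ k) → ℝ) (a : ZMod (p ^ k)) :
    (lapMat (grpAnnGraph (ZMod (p ^ k))) *ᵥ f) a =
      p ^ padicValZMod p k a * f a -
        ∑ b with k - padicValZMod p k a ≤ padicValZMod p k b, f b := by
  classical
  have ha := padicValZMod_le a
  rw [lapMat_mulVec_apply_of_neighborFinset _ f a
    {b | k - padicValZMod p k a ≤ padicValZMod p k b} ?_, card_le_padicValZMod (by omega),
    Nat.sub_sub_self ha, Nat.cast_pow]
  ext b
  simp only [SimpleGraph.mem_neighborFinset, grpAnnGraph_zmod_adj_iff,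
    mul_eq_zero_iff_le_padicValZMod_add, mem_erase, mem_filter, mem_univ, true_and]
  exact and_congr ne_comm (by omega)

theorem lapMat_mulVec_valIndicator {t : ℕ} (ht : t ≤ k) (a : ZMod (p ^ k)) :
    (lapMat (grpAnnGraph (ZMod (p ^ k))) *ᵥ valIndicator p k t) a =
      p ^ padicValZMod p k a * valIndicator p k t a - p ^ min (padicValZMod p k a) (k - t) := by
  have ha := padicValZMod_le a
  rw [lapMat_grpAnnGraph_mulVec_apply]
  congr 1
  simp only [valIndicator, sum_boole, filter_filter, ← max_le_iff]
  rw [card_le_padicValZMod (max_le (by omega) ht), Nat.cast_pow]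
  congr 1
  omega

theorem hasEigenvector_smul_valIndicator_sub_one (hk : 1 ≤ k) :
    HasEigenvector (toLin' (lapMat (grpAnnGraph (ZMod (p ^ k))))) (p ^ k)
      ((p ^ k : ℝ) • valIndicator p k k - fun _ => 1) := by
  have hp : (1 : ℝ) < p := by exact_mod_cast (Fact.out : p.Prime).one_lt
  refine Matrix.hasEigenvector_toLin'_iff.mpr ⟨?_, Function.ne_iff.mpr ⟨0, ?_⟩⟩
  · ext a
    have ha := padicValZMod_le a
    simp only [mulVec_sub, mulVec_smul, lapMat_mulVec_const, Pi.sub_apply, Pi.smul_apply,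
      smul_eq_mul, lapMat_mulVec_valIndicator le_rfl, Nat.sub_self, Nat.min_zero, pow_zero,
      Pi.zero_apply, sub_zero, valIndicator]
    split_ifs with h
    · rw [le_antisymm ha h]
    · ring
  · simp only [Pi.sub_apply, Pi.smul_apply, smul_eq_mul, valIndicator, padicValZMod_zero, le_rfl,
      if_true, mul_one, Pi.zero_apply, sub_ne_zero]
    exact (one_lt_pow₀ hp (by omega)).ne'

theorem hasEigenvector_single_sub_single {x y : ZMod (p ^ k)} (hxy : x ≠ y)
    (h : padicValZMod p k x = padicValZMod p k y) :
    HasEigenvector (toLin' (lapMat (grpAnnGraph (ZMod (p ^ k)))))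
      (p ^ padicValZMod p k x) (Pi.single x 1 - Pi.single y 1) := by
  refine Matrix.hasEigenvector_toLin'_iff.mpr ⟨?_, Function.ne_iff.mpr ⟨x, ?_⟩⟩
  · ext a
    rw [lapMat_grpAnnGraph_mulVec_apply]
    simp only [Pi.sub_apply, sum_sub_distrib, Finset.sum_pi_single', mem_filter, mem_univ, true_and,
      h, sub_self, sub_zero, Pi.smul_apply, smul_eq_mul]
    by_cases hx : a = x
    · rw [hx, h]
    by_cases hy : a = y
    · rw [hy]
    · simp [hx, hy]
  · simp [hxy]

/-- For `j = s` or `j = s + 1`, i.e. `j = k / 2`, this vector is zero: `p ^ (k / 2)` is the one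
power of `p` that this family misses. -/
theorem hasEigenvector_pow_of_add_eq {j s : ℕ} (hk : j + s + 1 = k) (hjs : j ≠ s)
    (hjs' : j ≠ s + 1) :
    HasEigenvector (toLin' (lapMat (grpAnnGraph (ZMod (p ^ k))))) (p ^ j)
      (((p : ℝ) ^ j - p ^ s) • valIndicator p k j
        + ((p : ℝ) ^ (s + 1) - p ^ j) • valIndicator p k (j + 1)
        + ((p : ℝ) ^ s - p ^ (s + 1)) • valIndicator p k (s + 1)) := by
  have hp : (1 : ℝ) < p := by exact_mod_cast (Fact.out : p.Prime).one_lt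
  refine Matrix.hasEigenvector_toLin'_iff.mpr ⟨?_, Function.ne_iff.mpr ⟨(p ^ j : ℕ), ?_⟩⟩
  · ext a
    simp only [mulVec_add, mulVec_smul, Pi.add_apply, Pi.smul_apply, smul_eq_mul,
      lapMat_mulVec_valIndicator (show j ≤ k by omega),
      lapMat_mulVec_valIndicator (show j + 1 ≤ k by omega),
      lapMat_mulVec_valIndicator (show s + 1 ≤ k by omega)]
    obtain ⟨hj, hj', hs⟩ : k - j = s + 1 ∧ k - (j + 1) = s ∧ k - (s + 1) = j := by omega
    simp only [valIndicator, hj, hj', hs, min_def]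
    generalize padicValZMod p k a = i
    split_ifs <;> first
      | omega | ring1
      | ((obtain rfl : i = j := by omega); ring1)
      | ((obtain rfl : i = s + 1 := by omega); ring1)
  · simp only [Pi.add_apply, Pi.smul_apply, smul_eq_mul, valIndicator,
      padicValZMod_pow (show j ≤ k by omega), Pi.zero_apply]
    rw [if_pos le_rfl, if_neg (by omega), mul_one, mul_zero, add_zero]
    rcases lt_or_gt_of_ne hjs with h | h
    · rw [if_neg (by omega), mul_zero, add_zero, sub_ne_zero]
      exact (pow_lt_pow_right₀ hp h).ne
    · rw [if_pos (by omega), mul_one, sub_add_sub_cancel, sub_ne_zero]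
      exact (pow_lt_pow_right₀ hp (show s + 1 < j by omega)).ne'

theorem mem_valInvariant_of_mulVec_eq_smul {μ : ℝ} (hμ : ∀ i ≤ k, μ ≠ p ^ i)
    {u : ZMod (p ^ k) → ℝ} (hu : lapMat (grpAnnGraph (ZMod (p ^ k))) *ᵥ u = μ • u) :
    u ∈ valInvariant p k := by
  have hval (a : ZMod (p ^ k)) :
      u a = (∑ b with k - padicValZMod p k a ≤ padicValZMod p k b, u b) /
        (p ^ padicValZMod p k a - μ) := by
    have := congrFun hu a
    rw [lapMat_grpAnnGraph_mulVec_apply, Pi.smul_apply, smul_eq_mul] at this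
    rw [eq_div_iff (sub_ne_zero.mpr (hμ _ (padicValZMod_le a)).symm)]
    linear_combination this
  intro a b h
  rw [hval a, hval b, h]

theorem exists_mem_valInvariant_hasEigenvector (hk : 1 ≤ k) {i : ℕ} (hi : i ≤ k)
    (hik : i ≠ k / 2) :
    ∃ v ∈ valInvariant p k,
      HasEigenvector (toLin' (lapMat (grpAnnGraph (ZMod (p ^ k))))) (p ^ i) v := by
  have hχ := valIndicator_mem_valInvariant (p := p) (k := k)
  rcases hi.lt_or_eq with hi | rfl
  · exact ⟨_, add_mem (add_mem (Submodule.smul_mem _ _ (hχ _)) (Submodule.smul_mem _ _ (hχ _)))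
      (Submodule.smul_mem _ _ (hχ _)),
      hasEigenvector_pow_of_add_eq (s := k - i - 1) (by omega) (by omega) (by omega)⟩
  · exact ⟨_, sub_mem (Submodule.smul_mem _ _ (hχ _)) (const_mem_valInvariant 1),
      hasEigenvector_smul_valIndicator_sub_one hk⟩

theorem eq_zero_or_pow_of_hasEigenvector_mem_valInvariant (hk : 1 ≤ k) {μ : ℝ}
    {u : ZMod (p ^ k) → ℝ}
    (hu : HasEigenvector (toLin' (lapMat (grpAnnGraph (ZMod (p ^ k))))) μ u)
    (huW : u ∈ valInvariant p k) : μ = 0 ∨ ∃ i ≤ k, μ = p ^ i := by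
  classical
  have hp : (1 : ℝ) < p := by exact_mod_cast (Fact.out : p.Prime).one_lt
  have hpow_inj : Function.Injective fun i : ℕ => (p : ℝ) ^ i :=
    pow_right_injective₀ (by positivity) hp.ne'
  have hΛ : μ ∈ insert 0 (((range (k + 1)).erase (k / 2)).image fun i => (p : ℝ) ^ i) := by
    refine mem_of_hasEigenvector_of_finrank_le ?_ ?_ hu huW
    · rw [card_insert_of_notMem (by simp [(pow_pos (zero_lt_one.trans hp) _).ne']),
        card_image_of_injective _ hpow_inj, card_erase_of_mem (mem_range.mpr (by omega)),
        card_range]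
      exact finrank_valInvariant_le.trans (by omega)
    · simp only [mem_insert, mem_image, mem_erase, mem_range]
      rintro ν (rfl | ⟨i, ⟨hik, hi⟩, rfl⟩)
      · exact ⟨_, const_mem_valInvariant 1, lapMat_hasEigenvector_const _⟩
      · exact exists_mem_valInvariant_hasEigenvector hk (Nat.lt_succ_iff.mp hi) hik
  simp only [mem_insert, mem_image, mem_erase, mem_range] at hΛ
  rcases hΛ with rfl | ⟨i, ⟨-, hi⟩, rfl⟩
  · exact Or.inl rfl
  · exact Or.inr ⟨i, Nat.lt_succ_iff.mp hi, rfl⟩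

end Laplacian

/-- For an odd prime `p` and `k ≥ 1`, the Laplacian spectrum of the
group-annihilator graph `Γ(ℤ/p^kℤ)` is exactly `{0, 1, p, p², …, p^{k-1}, p^k}`. -/
theorem lap_spectrum_grpAnnGraph (p k : ℕ) [Fact p.Prime] (hp2 : p ≠ 2) (hk : 1 ≤ k) (μ : ℝ) :
    μ ∈ spectrum ℝ (lapMat (grpAnnGraph (ZMod (p ^ k)))) ↔
      μ = 0 ∨ ∃ i ≤ k, μ = (p : ℝ) ^ i := by
  rw [← Matrix.spectrum_toLin', ← hasEigenvalue_iff_mem_spectrum]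
  refine ⟨fun hμ => ?_, ?_⟩
  · obtain ⟨u, hu⟩ := hμ.exists_hasEigenvector
    by_cases hpow : ∃ i ≤ k, μ = p ^ i
    · exact Or.inr hpow
    push Not at hpow
    exact eq_zero_or_pow_of_hasEigenvector_mem_valInvariant hk hu
      (mem_valInvariant_of_mulVec_eq_smul hpow (Matrix.hasEigenvector_toLin'_iff.mp hu).1)
  · rintro (rfl | ⟨i, hi, rfl⟩)
    · exact hasEigenvalue_of_hasEigenvector (lapMat_hasEigenvector_const _)
    rcases hi.lt_or_eq with hi | rfl
    · obtain ⟨x, y, hxy, hx, hy⟩ := exists_ne_padicValZMod_eq hp2 hi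
      exact hasEigenvalue_of_hasEigenvector
        (hx ▸ hasEigenvector_single_sub_single hxy (hx.trans hy.symm))
    · exact hasEigenvalue_of_hasEigenvector (hasEigenvector_smul_valIndicator_sub_one hk)
end
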